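/- arXiv:2009.06839 — 2 statements merged into one kernel-verified Lean document; each statement's English description precedes it below -/
import Mathlib

section
/- Let N ≥ 1, ℓ = (ℓ₁, …, ℓ_N) ∈ ℝ^N, let z₁, …, z_N ∈ ℂ be pairwise distinct, and let c ∈ ℂ be such that z_i + c ≠ z_j for all i ≠ j. Then ∑_{i=1}^N ∏_{j ≠ i} ((z_i + c − z_j)/(z_i − z_j)) · 𝓑_ℓ(z₁, …, z_{i−1}, z_i + c, z_{i+1}, …, z_N) = ( ∑_{j=1}^N e^{c ℓ_j} ) · 𝓑_ℓ(z₁, …, z_N). -/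
/-!
Write `𝓑_ℓ(w) = det E(w) / Δ(w)` with `E(w) = (e^{w_i ℓ_j})`. Replacing `z_i` by `z_i + c`
multiplies row `i` of `E(z)` entrywise by `(e^{c ℓ_j})_j` and multiplies `Δ(z)` by
`∏_{j ≠ i} (z_i + c - z_j) / (z_i - z_j)`, so the `i`-th summand is `det E_i / Δ(z)`, where `E_i`
is `E(z)` with its `i`-th row so rescaled. Expanding `det E_i` along row `i` with the adjugate and
summing over `i` gives `∑_j e^{c ℓ_j} (adj E(z) · E(z))_{jj} = (∑_j e^{c ℓ_j}) det E(z)`.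
-/

open Complex Finset Filter Topology

noncomputable section

/-- Vandermonde product `Δ(w) = ∏_{i<j} (w i - w j)`. -/
def vprod {m : ℕ} (w : Fin m → ℂ) : ℂ :=
  ∏ i : Fin m, ∏ j : Fin m, if i < j then w i - w j else 1

/-- The multivariate Bessel function `𝓑_ℓ(w) = det(e^{w_i ℓ_j}) / Δ(w)`. -/
def besselFun (N : ℕ) (l : Fin N → ℝ) (w : Fin N → ℂ) : ℂ :=
  (Matrix.of fun i j : Fin N => Complex.exp (w i * (l j : ℂ))).det / vprod w

namespace Matrix

variable {n R : Type*} [Fintype n] [DecidableEq n] [CommRing R]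

theorem det_updateRow_eq_sum_adjugate (A : Matrix n n R) (i : n) (v : n → R) :
    (A.updateRow i v).det = ∑ j, v j * adjugate A j i := by
  rw [← cramer_transpose_apply, cramer_eq_adjugate_mulVec, mulVec, dotProduct,
    ← adjugate_transpose]
  simp only [transpose_apply, mul_comm]

theorem sum_det_updateRow_mul (A : Matrix n n R) (d : n → R) :
    ∑ i, (A.updateRow i fun j => A i j * d j).det = (∑ j, d j) * A.det := by
  have hdiag (j : n) : ∑ i, A i j * d j * adjugate A j i = d j * A.det := by
    rw [det_eq_sum_mul_adjugate_col A j, mul_sum]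
    exact sum_congr rfl fun i _ => by ring
  simp_rw [det_updateRow_eq_sum_adjugate]
  rw [sum_comm]
  simp_rw [hdiag, sum_mul]

end Matrix

theorem Finset.prod_prod_eq_mul_prod_erase {ι M : Type*} [Fintype ι] [DecidableEq ι]
    [CommMonoid M] (F : ι → ι → M) (i : ι) :
    ∏ p, ∏ q, F p q = F i i * (∏ q ∈ univ.erase i, F i q * F q i) *
      ∏ p ∈ univ.erase i, ∏ q ∈ univ.erase i, F p q := by
  simp_rw [← mul_prod_erase univ _ (mem_univ i), prod_mul_distrib]
  ac_rfl

theorem Function.Injective.update_of_forall_ne {α β : Type*} [DecidableEq α] {f : α → β}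
    (hf : Function.Injective f) {i : α} {b : β} (hb : ∀ j, j ≠ i → b ≠ f j) :
    Function.Injective (Function.update f i b) := fun p q h => by
  grind [Function.update_apply]

theorem vprod_eq_mul_prod_erase {N : ℕ} (w : Fin N → ℂ) (i : Fin N) :
    vprod w = (∏ j ∈ univ.erase i, (if i < j then 1 else -1) * (w i - w j)) *
      ∏ p ∈ univ.erase i, ∏ q ∈ univ.erase i, (if p < q then w p - w q else 1) := by
  have hpair (j : Fin N) (hj : j ∈ univ.erase i) :
      (if i < j then w i - w j else 1) * (if j < i then w j - w i else 1) =
        (if i < j then 1 else -1) * (w i - w j) := by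
    rcases (ne_of_mem_erase hj).lt_or_gt with h | h <;> simp [h, h.not_gt]
  rw [vprod, prod_prod_eq_mul_prod_erase _ i, prod_congr rfl hpair, if_neg (lt_irrefl i), one_mul]

theorem vprod_update_mul {N : ℕ} (z : Fin N → ℂ) (i : Fin N) (a : ℂ) :
    vprod (Function.update z i a) * ∏ j ∈ univ.erase i, (z i - z j) =
      vprod z * ∏ j ∈ univ.erase i, (a - z j) := by
  have hrow : ∏ j ∈ univ.erase i, (if i < j then 1 else -1) *
      (Function.update z i a i - Function.update z i a j) =
        ∏ j ∈ univ.erase i, (if i < j then 1 else -1) * (a - z j) :=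
    prod_congr rfl fun j hj => by
      rw [Function.update_self, Function.update_of_ne (ne_of_mem_erase hj)]
  have hrest : ∏ p ∈ univ.erase i, ∏ q ∈ univ.erase i,
      (if p < q then Function.update z i a p - Function.update z i a q else 1) =
        ∏ p ∈ univ.erase i, ∏ q ∈ univ.erase i, (if p < q then z p - z q else 1) :=
    prod_congr rfl fun p hp => prod_congr rfl fun q hq => by
      rw [Function.update_of_ne (ne_of_mem_erase hp), Function.update_of_ne (ne_of_mem_erase hq)]
  rw [vprod_eq_mul_prod_erase _ i, vprod_eq_mul_prod_erase z i, hrow, hrest, prod_mul_distrib,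
    prod_mul_distrib]
  ring

theorem vprod_ne_zero {N : ℕ} {w : Fin N → ℂ} (hw : Function.Injective w) : vprod w ≠ 0 :=
  prod_ne_zero_iff.2 fun i _ => prod_ne_zero_iff.2 fun j _ => by
    split_ifs with h
    · exact sub_ne_zero.2 (hw.ne h.ne)
    · exact one_ne_zero

def besselMatrix {N : ℕ} (l : Fin N → ℝ) (w : Fin N → ℂ) : Matrix (Fin N) (Fin N) ℂ :=
  Matrix.of fun i j => exp (w i * l j)

theorem besselFun_eq_det_div {N : ℕ} (l : Fin N → ℝ) (w : Fin N → ℂ) :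
    besselFun N l w = (besselMatrix l w).det / vprod w :=
  rfl

theorem besselMatrix_update_add {N : ℕ} (l : Fin N → ℝ) (z : Fin N → ℂ) (i : Fin N) (c : ℂ) :
    besselMatrix l (Function.update z i (z i + c)) =
      (besselMatrix l z).updateRow i fun j => besselMatrix l z i j * exp (c * l j) := by
  ext p j
  rcases eq_or_ne p i with rfl | hp
  · simp [besselMatrix, ← exp_add, add_mul]
  · simp [besselMatrix, hp]

theorem prod_erase_div_mul_besselFun_update {N : ℕ} (l : Fin N → ℝ) {z : Fin N → ℂ}
    (hz : Function.Injective z) {i : Fin N} {a : ℂ} (ha : ∀ j, j ≠ i → a ≠ z j) :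
    (∏ j ∈ univ.erase i, (a - z j) / (z i - z j)) * besselFun N l (Function.update z i a) =
      (besselMatrix l (Function.update z i a)).det / vprod z := by
  have hden : ∏ j ∈ univ.erase i, (z i - z j) ≠ 0 :=
    prod_ne_zero_iff.2 fun j hj => sub_ne_zero.2 (hz.ne (ne_of_mem_erase hj).symm)
  rw [prod_div_distrib, besselFun_eq_det_div, div_mul_div_comm,
    div_eq_div_iff (mul_ne_zero hden (vprod_ne_zero (hz.update_of_forall_ne ha))) (vprod_ne_zero hz)]
  linear_combination -(besselMatrix l (Function.update z i a)).det * vprod_update_mul z i a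

theorem statement8_general (N : ℕ) (l : Fin N → ℝ)
    (z : Fin N → ℂ) (hz : Function.Injective z) (c : ℂ)
    (hc : ∀ i j : Fin N, i ≠ j → z i + c ≠ z j) :
    ∑ i : Fin N,
        (∏ j ∈ Finset.univ.erase i, (z i + c - z j) / (z i - z j)) *
          besselFun N l (Function.update z i (z i + c)) =
      (∑ j : Fin N, Complex.exp (c * (l j : ℂ))) * besselFun N l z := by
  simp_rw [prod_erase_div_mul_besselFun_update l hz fun j hj => hc _ j hj.symm,
    besselMatrix_update_add]
  rw [← sum_div, Matrix.sum_det_updateRow_mul, besselFun_eq_det_div, mul_div_assoc]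

/-- Eigenrelation for the multivariate Bessel function:
`∑_i ∏_{j≠i} ((z_i + c − z_j)/(z_i − z_j)) 𝓑_ℓ(z with z_i ↦ z_i + c)
 = (∑_j e^{c ℓ_j}) 𝓑_ℓ(z)`. -/
theorem statement8 (N : ℕ) (hN : 1 ≤ N) (l : Fin N → ℝ)
    (z : Fin N → ℂ) (hz : Function.Injective z) (c : ℂ)
    (hc : ∀ i j : Fin N, i ≠ j → z i + c ≠ z j) :
    ∑ i : Fin N,
        (∏ j ∈ Finset.univ.erase i, (z i + c - z j) / (z i - z j)) *
          besselFun N l (Function.update z i (z i + c)) =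
      (∑ j : Fin N, Complex.exp (c * (l j : ℂ))) * besselFun N l z :=
  statement8_general N l z hz c hc
end
end

section
/- Let μ be a Borel probability measure on ℝ with compact support, and let E₋ and E₊ denote the infimum and supremum of supp μ. Let r > 0 with r ≥ 4(E₊ − E₋), let z₀ ∈ ℂ with dist(z₀, supp μ) ≥ r, set u := G_μ(z₀), and let z₁ ∈ ℂ ∖ supp μ satisfy |z₁ − x| ≤ r/4 for every x ∈ supp μ. Then Re(u·z₁) − ∫ log|z₁ − x| dμ(x) > Re(u·z₀) − ∫ log|z₀ − x| dμ(x). -/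
/-! Pointwise in `x ∈ supp μ`, with `a = z₀ - x` and `b = z₁ - x` we have `4‖b‖ ≤ ‖a‖`, so
`Re(a⁻¹ (b - a)) + log ‖a‖ - log ‖b‖ ≥ -1/4 - 1 + log 4 > 0`. Integrating against `μ` gives the
claim, because `∫ Re((z₀ - x)⁻¹ (z₁ - z₀)) dμ = Re(u z₁) - Re(u z₀)`. -/

open MeasureTheory Filter Topology

noncomputable section

/-- The (topological) support of a measure on `ℝ`: the set of points all of whose open
neighborhoods have positive measure. -/
def msupp (μ : Measure ℝ) : Set ℝ :=
  {x : ℝ | ∀ U : Set ℝ, IsOpen U → x ∈ U → 0 < μ U}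

lemma msupp_eq_support (μ : Measure ℝ) : msupp μ = μ.support := by
  ext x
  simp only [msupp, Measure.support_eq_forall_isOpen, Set.mem_ofPred_eq]
  exact forall_congr' fun _ => forall_comm

lemma ae_mem_msupp (μ : Measure ℝ) : ∀ᵐ x ∂μ, x ∈ msupp μ :=
  msupp_eq_support μ ▸ Measure.support_mem_ae

section IntegrableOnSupport

variable {μ : Measure ℝ} [IsFiniteMeasureOnCompacts μ] (hK : IsCompact (msupp μ))
include hK

lemma integrable_of_continuousOn_msupp {E : Type*} [NormedAddCommGroup E] {f : ℝ → E}
    (hf : ContinuousOn f (msupp μ)) : Integrable f μ := by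
  rw [← Measure.restrict_eq_self_of_ae_mem (ae_mem_msupp μ)]
  exact hf.integrableOn_compact hK

lemma integrable_log_norm_sub_ofReal {z : ℂ} (hz : ∀ x ∈ msupp μ, z - x ≠ 0) :
    Integrable (fun x : ℝ => Real.log ‖z - x‖) μ :=
  integrable_of_continuousOn_msupp hK <| ContinuousOn.log (by fun_prop)
    fun x hx => norm_ne_zero_iff.mpr (hz x hx)

lemma integrable_inv_sub_ofReal {z : ℂ} (hz : ∀ x ∈ msupp μ, z - x ≠ 0) :
    Integrable (fun x : ℝ => (z - x)⁻¹) μ :=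
  integrable_of_continuousOn_msupp hK <|
    (continuous_const.sub Complex.continuous_ofReal).continuousOn.inv₀ hz

end IntegrableOnSupport

lemma log_four_sub_le_re_inv_mul_add_log_sub_log {a b : ℂ} (hb : b ≠ 0)
    (hab : 4 * ‖b‖ ≤ ‖a‖) :
    Real.log 4 - 5 / 4 ≤ (a⁻¹ * (b - a)).re + (Real.log ‖a‖ - Real.log ‖b‖) := by
  have hb_pos : 0 < ‖b‖ := norm_pos_iff.mpr hb
  have ha_pos : 0 < ‖a‖ := by linarith
  have ha : a ≠ 0 := norm_pos_iff.mp ha_pos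
  have hre : (a⁻¹ * (b - a)).re = (b / a).re - 1 := by
    rw [mul_sub, inv_mul_cancel₀ ha, inv_mul_eq_div, Complex.sub_re, Complex.one_re]
  have hdiv : ‖b / a‖ ≤ 1 / 4 := by
    rw [norm_div, div_le_iff₀ ha_pos]
    linarith
  have hlog : Real.log 4 ≤ Real.log ‖a‖ - Real.log ‖b‖ := by
    rw [← Real.log_div ha_pos.ne' hb_pos.ne']
    exact Real.log_le_log (by norm_num) ((le_div_iff₀ hb_pos).mpr hab)
  linarith [neg_abs_le (b / a).re, Complex.abs_re_le_norm (b / a)]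

lemma five_div_four_lt_log_four : 5 / 4 < Real.log 4 := by
  rw [show (4 : ℝ) = 2 ^ 2 by norm_num, Real.log_pow]
  linarith [Real.log_two_gt_d9]

theorem statement14_general (μ : Measure ℝ) [IsProbabilityMeasure μ]
    (hcompact : IsCompact (msupp μ))
    (r : ℝ) (hr : 0 < r)
    (z₀ : ℂ) (hz₀ : r ≤ Metric.infDist z₀ ((fun x : ℝ => (x : ℂ)) '' msupp μ))
    (z₁ : ℂ) (hz₁ : z₁ ∉ (fun x : ℝ => (x : ℂ)) '' msupp μ)
    (hz₁close : ∀ x ∈ msupp μ, ‖z₁ - (x : ℂ)‖ ≤ r / 4) :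
    let u : ℂ := ∫ x, (z₀ - (x : ℂ))⁻¹ ∂μ
    (u * z₀).re - (∫ x, Real.log (‖z₀ - (x : ℂ)‖) ∂μ) <
      (u * z₁).re - ∫ x, Real.log (‖z₁ - (x : ℂ)‖) ∂μ := by
  intro u
  have hz₀_far : ∀ x ∈ msupp μ, r ≤ ‖z₀ - x‖ := fun x hx => hz₀.trans <| by
    simpa [Complex.dist_eq] using Metric.infDist_le_dist_of_mem (x := z₀)
      (Set.mem_image_of_mem (fun x : ℝ => (x : ℂ)) hx)
  have hz₀_ne : ∀ x ∈ msupp μ, z₀ - x ≠ 0 := fun x hx =>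
    norm_pos_iff.mp (hr.trans_le (hz₀_far x hx))
  have hz₁_ne : ∀ x ∈ msupp μ, z₁ - x ≠ 0 := fun x hx h =>
    hz₁ ⟨x, hx, (sub_eq_zero.mp h).symm⟩
  have hlog₀ := integrable_log_norm_sub_ofReal hcompact hz₀_ne
  have hlog₁ := integrable_log_norm_sub_ofReal hcompact hz₁_ne
  have hcauchy : Integrable (fun x : ℝ => (z₀ - x)⁻¹ * (z₁ - z₀)) μ :=
    (integrable_inv_sub_ofReal hcompact hz₀_ne).mul_const _
  have hre_int : Integrable (fun x : ℝ => ((z₀ - x)⁻¹ * (z₁ - z₀)).re) μ := hcauchy.re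
  have hre : ∫ x, ((z₀ - x)⁻¹ * (z₁ - z₀)).re ∂μ = (u * z₁).re - (u * z₀).re := by
    refine (integral_re hcauchy).trans ?_
    rw [integral_mul_const, RCLike.re_eq_complex_re, mul_sub, Complex.sub_re]
  have hgain : Real.log 4 - 5 / 4 ≤ ∫ x, (((z₀ - x)⁻¹ * (z₁ - z₀)).re +
      (Real.log ‖z₀ - x‖ - Real.log ‖z₁ - x‖)) ∂μ := by
    refine le_of_eq_of_le (by simp : Real.log 4 - 5 / 4 = ∫ _, (Real.log 4 - 5 / 4) ∂μ)
      (integral_mono_ae (integrable_const _) (hre_int.add (hlog₀.sub' hlog₁)) ?_)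
    filter_upwards [ae_mem_msupp μ] with x hx
    simpa only [sub_sub_sub_cancel_right] using
      log_four_sub_le_re_inv_mul_add_log_sub_log (a := z₀ - x) (hz₁_ne x hx)
        (by linarith [hz₀_far x hx, hz₁close x hx])
  rw [integral_add hre_int (hlog₀.sub' hlog₁), integral_sub hlog₀ hlog₁, hre] at hgain
  linarith [five_div_four_lt_log_four]

/-- Let `μ` be a compactly supported probability measure on `ℝ`,
`r ≥ 4(E₊ − E₋)`, `z₀ ∈ ℂ` with `dist(z₀, supp μ) ≥ r`, `u := G_μ(z₀)`, and
`z₁ ∈ ℂ ∖ supp μ` with `|z₁ − x| ≤ r/4` for every `x ∈ supp μ`.  Then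
`Re(u z₁) − ∫ log|z₁ − x| dμ(x) > Re(u z₀) − ∫ log|z₀ − x| dμ(x)`. -/
theorem statement14 (μ : Measure ℝ) [IsProbabilityMeasure μ]
    (hcompact : IsCompact (msupp μ))
    (r : ℝ) (hr : 0 < r) (hr4 : 4 * (sSup (msupp μ) - sInf (msupp μ)) ≤ r)
    (z₀ : ℂ) (hz₀ : r ≤ Metric.infDist z₀ ((fun x : ℝ => (x : ℂ)) '' msupp μ))
    (z₁ : ℂ) (hz₁ : z₁ ∉ (fun x : ℝ => (x : ℂ)) '' msupp μ)
    (hz₁close : ∀ x ∈ msupp μ, ‖z₁ - (x : ℂ)‖ ≤ r / 4) :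
    let u : ℂ := ∫ x, (z₀ - (x : ℂ))⁻¹ ∂μ
    (u * z₀).re - (∫ x, Real.log (‖z₀ - (x : ℂ)‖) ∂μ) <
      (u * z₁).re - ∫ x, Real.log (‖z₁ - (x : ℂ)‖) ∂μ :=
  statement14_general μ hcompact r hr z₀ hz₀ z₁ hz₁ hz₁close
end
end
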